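/- arXiv:1703.02646 — 5 statements merged into one kernel-verified Lean document; each statement's English description precedes it below -/
import Mathlib

section
/- For all real numbers M > 0, D > 0, B > 0, the integral (1/(2π)) ∫_{-∞}^{∞} B / ((B − Mω²)² + D²ω²) dω equals 1/(2D). (Equivalently, the squared H₂ norm of the SMIB transfer function G(s) = √B/(Ms² + Ds + B) equals 1/(2D), independently of the inertia M.) -/
/-!
Split the line at `0`. The inversion `ω ↦ -B / (M ω)` maps `(0, ∞)` onto `(-∞, 0)` and turns
`f ω dω = B / ((B - M ω²)² + D² ω²) dω` into `M ω² / ((B - M ω²)² + D² ω²) dω`, so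
`∫_ℝ f = ∫₀^∞ (B + M ω²) / ((B - M ω²)² + D² ω²) dω = ∫₀^∞ (M + B / ω²) / ((M ω - B / ω)² + D²) dω`.
The substitution `u = M ω - B / ω`, an increasing bijection `(0, ∞) → ℝ`, turns the last integral
into `∫_ℝ du / (u² + D²) = π / D`, whatever the sign of the discriminant `D² - 4 M B`.
-/

open MeasureTheory Set Real

theorem hasDerivAt_const_div_id {𝕜 : Type*} [NontriviallyNormedField 𝕜] (c : 𝕜) {x : 𝕜}
    (hx : x ≠ 0) : HasDerivAt (fun y => c / y) (-c / x ^ 2) x := by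
  simpa [div_eq_mul_inv, neg_div] using (hasDerivAt_inv hx).const_mul c

section ChangeOfVariables

variable {E : Type*} [NormedAddCommGroup E] [NormedSpace ℝ E] {a b c : ℝ}

theorem hasDerivWithinAt_neg_div {x : ℝ} (hx : x ∈ Ioi 0) :
    HasDerivWithinAt (fun x => -c / x) (c / x ^ 2) (Ioi 0) x := by
  simpa using (hasDerivAt_const_div_id (-c) (ne_of_gt hx)).hasDerivWithinAt

theorem injOn_neg_div_Ioi_zero (hc : c ≠ 0) : InjOn (fun x : ℝ => -c / x) (Ioi 0) := by
  intro x _ y _ h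
  simpa [div_eq_mul_inv, hc] using h

theorem image_neg_div_Ioi_zero (hc : 0 < c) : (fun x : ℝ => -c / x) '' Ioi 0 = Iio 0 := by
  ext y
  refine ⟨?_, fun hy => ⟨-c / y, div_pos_of_neg_of_neg (neg_neg_of_pos hc) hy, ?_⟩⟩
  · rintro ⟨x, hx, rfl⟩
    exact div_neg_of_neg_of_pos (neg_neg_of_pos hc) hx
  · field_simp [(mem_Iio.1 hy).ne]

theorem integrableOn_Iio_zero_iff_integrableOn_Ioi_comp_neg_div (hc : 0 < c) (g : ℝ → E) :
    IntegrableOn g (Iio 0) ↔ IntegrableOn (fun x => (c / x ^ 2) • g (-c / x)) (Ioi 0) := by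
  rw [← image_neg_div_Ioi_zero hc, integrableOn_image_iff_integrableOn_abs_deriv_smul
    measurableSet_Ioi (fun x hx => hasDerivWithinAt_neg_div hx) (injOn_neg_div_Ioi_zero hc.ne')]
  refine integrableOn_congr_fun (fun x hx => ?_) measurableSet_Ioi
  simp only [abs_of_pos (div_pos hc (pow_pos hx 2))]

theorem integral_Iio_zero_eq_integral_Ioi_comp_neg_div (hc : 0 < c) (g : ℝ → E) :
    ∫ x in Iio 0, g x = ∫ x in Ioi 0, (c / x ^ 2) • g (-c / x) := by
  rw [← image_neg_div_Ioi_zero hc, integral_image_eq_integral_abs_deriv_smul measurableSet_Ioi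
    (fun x hx => hasDerivWithinAt_neg_div hx) (injOn_neg_div_Ioi_zero hc.ne')]
  refine setIntegral_congr_fun measurableSet_Ioi fun x hx => ?_
  simp only [abs_of_pos (div_pos hc (pow_pos hx 2))]

theorem hasDerivWithinAt_mul_sub_div {x : ℝ} (hx : x ∈ Ioi 0) :
    HasDerivWithinAt (fun x => a * x - b / x) (a + b / x ^ 2) (Ioi 0) x := by
  have := ((hasDerivAt_id x).const_mul a).sub (hasDerivAt_const_div_id b (ne_of_gt hx))
  exact (this.congr_deriv (by ring)).hasDerivWithinAt

theorem strictMonoOn_mul_sub_div (ha : 0 < a) (hb : 0 ≤ b) :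
    StrictMonoOn (fun x : ℝ => a * x - b / x) (Ioi 0) := by
  intro x hx y _ hxy
  have : b / y ≤ b / x := div_le_div_of_nonneg_left hb hx hxy.le
  simp only
  nlinarith

theorem image_mul_sub_div_Ioi_zero (ha : 0 < a) (hb : 0 < b) :
    (fun x : ℝ => a * x - b / x) '' Ioi 0 = univ := by
  refine eq_univ_of_forall fun y => ?_
  set s := √(y ^ 2 + 4 * a * b)
  have hs : s ^ 2 = y ^ 2 + 4 * a * b := sq_sqrt (by positivity)
  have hys : 0 < y + s := by
    have : |y| < s := abs_lt_of_sq_lt_sq (by nlinarith [mul_pos ha hb]) (sqrt_nonneg _)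
    linarith [neg_abs_le y]
  -- the positive root of `a x² - y x - b`
  refine ⟨(y + s) / (2 * a), div_pos hys (by positivity), ?_⟩
  field_simp
  linear_combination hs

theorem integrableOn_Ioi_zero_comp_mul_sub_div_iff (ha : 0 < a) (hb : 0 < b) (g : ℝ → E) :
    IntegrableOn (fun x => (a + b / x ^ 2) • g (a * x - b / x)) (Ioi 0) ↔ Integrable g := by
  rw [← integrableOn_univ, ← image_mul_sub_div_Ioi_zero ha hb,
    integrableOn_image_iff_integrableOn_abs_deriv_smul measurableSet_Ioi
      (fun x hx => hasDerivWithinAt_mul_sub_div hx) (strictMonoOn_mul_sub_div ha hb.le).injOn]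
  refine integrableOn_congr_fun (fun x _ => ?_) measurableSet_Ioi
  simp only [abs_of_pos (by positivity : 0 < a + b / x ^ 2)]

theorem integral_Ioi_zero_comp_mul_sub_div (ha : 0 < a) (hb : 0 < b) (g : ℝ → E) :
    ∫ x in Ioi 0, (a + b / x ^ 2) • g (a * x - b / x) = ∫ y, g y := by
  rw [eq_comm, ← setIntegral_univ, ← image_mul_sub_div_Ioi_zero ha hb,
    integral_image_eq_integral_abs_deriv_smul measurableSet_Ioi
      (fun x hx => hasDerivWithinAt_mul_sub_div hx) (strictMonoOn_mul_sub_div ha hb.le).injOn]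
  refine setIntegral_congr_fun measurableSet_Ioi fun x _ => ?_
  simp only [abs_of_pos (by positivity : 0 < a + b / x ^ 2)]

end ChangeOfVariables

theorem MeasureTheory.IntegrableOn.of_nonneg_of_le {α : Type*} [MeasurableSpace α]
    {μ : Measure α} {s : Set α} {f F : α → ℝ} (hF : IntegrableOn F s μ) (hs : MeasurableSet s)
    (hf : AEStronglyMeasurable f (μ.restrict s)) (h0 : ∀ x ∈ s, 0 ≤ f x)
    (hle : ∀ x ∈ s, f x ≤ F x) : IntegrableOn f s μ :=
  hF.mono' hf <| ae_restrict_of_forall_mem hs fun x hx => by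
    rw [Real.norm_of_nonneg (h0 x hx)]
    exact hle x hx

section Lorentzian

variable {c : ℝ}

theorem inv_sq_add_sq_eq_mul_inv_one_add_div_sq (hc : c ≠ 0) (x : ℝ) :
    (c ^ 2 + x ^ 2)⁻¹ = (c ^ 2)⁻¹ * (1 + (x / c) ^ 2)⁻¹ := by
  field_simp

theorem integrable_inv_sq_add_sq (hc : c ≠ 0) : Integrable fun x : ℝ => (c ^ 2 + x ^ 2)⁻¹ := by
  simpa only [inv_sq_add_sq_eq_mul_inv_one_add_div_sq hc] using
    (integrable_inv_one_add_sq.comp_div hc).const_mul (c ^ 2)⁻¹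

theorem integral_univ_inv_sq_add_sq (hc : 0 < c) : ∫ x : ℝ, (c ^ 2 + x ^ 2)⁻¹ = π / c := by
  rw [funext (inv_sq_add_sq_eq_mul_inv_one_add_div_sq hc.ne'), integral_const_mul,
    Measure.integral_comp_div (fun x : ℝ => (1 + x ^ 2)⁻¹), integral_univ_inv_one_add_sq,
    abs_of_pos hc, smul_eq_mul]
  field_simp

end Lorentzian

/-- `|G(iω)|²` for `G(s) = √B / (M s² + D s + B)`. -/
noncomputable def smibGainSq (M D B ω : ℝ) : ℝ := B / ((B - M * ω ^ 2) ^ 2 + D ^ 2 * ω ^ 2)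

section SMIB

variable {M D B : ℝ}

theorem smibGainSq_nonneg (hB : 0 ≤ B) (ω : ℝ) : 0 ≤ smibGainSq M D B ω := by
  unfold smibGainSq
  positivity

@[fun_prop]
theorem measurable_smibGainSq : Measurable (smibGainSq M D B) := by
  unfold smibGainSq
  fun_prop

theorem smibGainSq_add_mul_smibGainSq_neg_div (hM : M ≠ 0) (hD : D ≠ 0) (hB : B ≠ 0) {x : ℝ}
    (hx : x ≠ 0) :
    smibGainSq M D B x + (B / M / x ^ 2) * smibGainSq M D B (-(B / M) / x) =
      (M + B / x ^ 2) * (D ^ 2 + (M * x - B / x) ^ 2)⁻¹ := by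
  unfold smibGainSq
  have : 0 < (B - M * x ^ 2) ^ 2 + D ^ 2 * x ^ 2 := by positivity
  field_simp
  ring

theorem integral_smibGainSq (hM : 0 < M) (hD : 0 < D) (hB : 0 < B) :
    ∫ ω, smibGainSq M D B ω = π / D := by
  set f := smibGainSq M D B
  set g : ℝ → ℝ := fun x => (B / M / x ^ 2) * f (-(B / M) / x)
  set F : ℝ → ℝ := fun x => (M + B / x ^ 2) * (D ^ 2 + (M * x - B / x) ^ 2)⁻¹
  have hc : 0 < B / M := div_pos hB hM
  have hsum : ∀ x ∈ Ioi (0 : ℝ), f x + g x = F x := fun x hx =>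
    smibGainSq_add_mul_smibGainSq_neg_div hM.ne' hD.ne' hB.ne' (ne_of_gt hx)
  have hf0 : ∀ x, 0 ≤ f x := smibGainSq_nonneg hB.le
  have hg0 : ∀ x ∈ Ioi (0 : ℝ), 0 ≤ g x := fun x _ => mul_nonneg (by positivity) (hf0 _)
  have hF : IntegrableOn F (Ioi 0) :=
    (integrableOn_Ioi_zero_comp_mul_sub_div_iff hM hB _).2 (integrable_inv_sq_add_sq hD.ne')
  have hf : IntegrableOn f (Ioi 0) :=
    hF.of_nonneg_of_le measurableSet_Ioi measurable_smibGainSq.aestronglyMeasurable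
      (fun x _ => hf0 x) fun x hx => by linarith [hsum x hx, hg0 x hx]
  have hg : IntegrableOn g (Ioi 0) :=
    hF.of_nonneg_of_le measurableSet_Ioi (by fun_prop : Measurable g).aestronglyMeasurable hg0
      fun x hx => by linarith [hsum x hx, hf0 x]
  have hfIio : IntegrableOn f (Iio 0) :=
    (integrableOn_Iio_zero_iff_integrableOn_Ioi_comp_neg_div hc f).2 hg
  calc
    ∫ ω, f ω = (∫ x in Iio 0, f x) + ∫ x in Ioi 0, f x := by
      rw [← integral_Ici_eq_integral_Ioi, intervalIntegral.integral_Iio_add_Ici hfIio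
        (Iff.mpr integrableOn_Ici_iff_integrableOn_Ioi hf)]
    _ = (∫ x in Ioi 0, g x) + ∫ x in Ioi 0, f x := by
      rw [integral_Iio_zero_eq_integral_Ioi_comp_neg_div hc]
      rfl
    _ = ∫ x in Ioi 0, F x := by
      rw [← integral_add hg hf]
      exact setIntegral_congr_fun measurableSet_Ioi fun x hx => (add_comm _ _).trans (hsum x hx)
    _ = π / D :=
      (integral_Ioi_zero_comp_mul_sub_div hM hB _).trans (integral_univ_inv_sq_add_sq hD)

end SMIB

/-- The squared H₂ norm of the SMIB transfer function
`G(s) = √B/(Ms² + Ds + B)` equals `1/(2D)`, independently of the inertia `M`: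
`(1/(2π)) ∫_{-∞}^{∞} B / ((B − Mω²)² + D²ω²) dω = 1/(2D)`. -/
theorem smib_H2_norm_sq (M D B : ℝ) (hM : 0 < M) (hD : 0 < D) (hB : 0 < B) :
    (1 / (2 * Real.pi)) * (∫ ω : ℝ, B / ((B - M * ω ^ 2) ^ 2 + D ^ 2 * ω ^ 2)) =
      1 / (2 * D) := by
  have h := integral_smibGainSq hM hD hB
  simp only [smibGainSq] at h
  rw [h]
  field_simp
end

section
/- Fix real numbers M > 0 and D > 0, and define h : (0, ∞) → ℝ by h(λ) = 2M√λ/(D·√(4Mλ − D²)) if D² ≤ 2Mλ, and h(λ) = 1/√λ otherwise. Then h is monotonically non-increasing on (0, ∞). -/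
/-- The H∞ norm of the second-order mode `G̃(s) = √λ/(Ms² + Ds + λ)` as a
function of the mode eigenvalue `λ`:
`h(λ) = 2M√λ/(D√(4Mλ − D²))` if `D² ≤ 2Mλ` and `h(λ) = 1/√λ` otherwise. -/
noncomputable def modeHinf (M D lam : ℝ) : ℝ :=
  if D ^ 2 ≤ 2 * M * lam then
    2 * M * Real.sqrt lam / (D * Real.sqrt (4 * M * lam - D ^ 2))
  else 1 / Real.sqrt lam

lemma modeHinf_aux1 (M D : ℝ) (hM : 0 < M) (hD : 0 < D) {a b : ℝ} (ha : 0 < a)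
    (hab : a ≤ b) (hDa : D ^ 2 ≤ 2 * M * a) :
    2 * M * Real.sqrt b / (D * Real.sqrt (4 * M * b - D ^ 2)) ≤
      2 * M * Real.sqrt a / (D * Real.sqrt (4 * M * a - D ^ 2)) := by
  have hb : 0 < b := ha.trans_le hab
  have h4a : 0 < 4 * M * a - D ^ 2 := by nlinarith
  have h4b : 0 < 4 * M * b - D ^ 2 := by nlinarith
  have hsa := Real.sqrt_pos.mpr h4a
  have hsb := Real.sqrt_pos.mpr h4b
  rw [div_le_div_iff₀ (by positivity) (by positivity)]
  have key : Real.sqrt b * Real.sqrt (4 * M * a - D ^ 2) ≤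
      Real.sqrt a * Real.sqrt (4 * M * b - D ^ 2) := by
    rw [← Real.sqrt_mul hb.le, ← Real.sqrt_mul ha.le]
    apply Real.sqrt_le_sqrt
    nlinarith
  nlinarith [mul_le_mul_of_nonneg_left key (by positivity : (0:ℝ) ≤ 2 * M * D)]

/-- For fixed `M > 0` and `D > 0`, the modal H∞ norm `h(λ)` is monotonically
non-increasing in `λ` on `(0, ∞)`. -/
theorem modeHinf_antitone (M D : ℝ) (hM : 0 < M) (hD : 0 < D) :
    AntitoneOn (fun lam => modeHinf M D lam) (Set.Ioi (0 : ℝ)) := by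
  intro a ha b hb hab
  simp only [Set.mem_Ioi] at ha hb
  simp only [modeHinf]
  by_cases hda : D ^ 2 ≤ 2 * M * a
  · have hdb : D ^ 2 ≤ 2 * M * b := by nlinarith
    rw [if_pos hda, if_pos hdb]
    exact modeHinf_aux1 M D hM hD ha hab hda
  · rw [if_neg hda]
    by_cases hdb : D ^ 2 ≤ 2 * M * b
    · rw [if_pos hdb]
      -- go through the threshold t = D^2/(2M)
      set t : ℝ := D ^ 2 / (2 * M) with ht
      have ht0 : 0 < t := by positivity
      have ht2 : 2 * M * t = D ^ 2 := by
        rw [ht]; field_simp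
      have hdt : D ^ 2 ≤ 2 * M * t := ht2.ge
      have htb : t ≤ b := by
        rw [ht, div_le_iff₀ (by positivity)]
        nlinarith
      have hat : a ≤ t := by
        rw [ht, le_div_iff₀ (by positivity)]
        nlinarith
      have step1 : 2 * M * Real.sqrt b / (D * Real.sqrt (4 * M * b - D ^ 2)) ≤
          2 * M * Real.sqrt t / (D * Real.sqrt (4 * M * t - D ^ 2)) :=
        modeHinf_aux1 M D hM hD ht0 htb hdt
      have hteq : 2 * M * Real.sqrt t / (D * Real.sqrt (4 * M * t - D ^ 2)) =
          1 / Real.sqrt t := by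
        have h4t : 4 * M * t - D ^ 2 = D ^ 2 := by linarith
        rw [h4t, Real.sqrt_sq hD.le]
        rw [div_eq_div_iff (by positivity) (Real.sqrt_pos.mpr ht0).ne']
        have : Real.sqrt t * Real.sqrt t = t := Real.mul_self_sqrt ht0.le
        nlinarith
      have step2 : (1:ℝ) / Real.sqrt t ≤ 1 / Real.sqrt a := by
        apply one_div_le_one_div_of_le (Real.sqrt_pos.mpr ha)
        exact Real.sqrt_le_sqrt hat
      calc 2 * M * Real.sqrt b / (D * Real.sqrt (4 * M * b - D ^ 2))
          ≤ 1 / Real.sqrt t := by rw [← hteq]; exact step1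
        _ ≤ 1 / Real.sqrt a := step2
    · rw [if_neg hdb]
      apply one_div_le_one_div_of_le (Real.sqrt_pos.mpr ha)
      exact Real.sqrt_le_sqrt hab
end

section
/- Let L ∈ ℝ^{n×n} be a symmetric positive semidefinite matrix whose eigenvalues are 0 = λ₁ < λ₂ ≤ … ≤ λ_n (i.e., 0 is a simple eigenvalue), let M > 0, D > 0, and let L^{1/2} be the positive semidefinite square root of L. Then the supremum over ω ∈ ℝ \ {0} of the operator norm ‖L^{1/2}(−Mω² I + jDω I + L)^{-1}‖ equals 2M√λ₂/(D·√(4Mλ₂ − D²)) if D² ≤ 2Mλ₂, and equals 1/√λ₂ otherwise. -/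
open Matrix

/-- The positive semidefinite square root of a positive semidefinite matrix, as defined
in Mathlib of December 2024 (removed since; restored here with its old definition). -/
noncomputable def Matrix.PosSemidef.sqrt {n 𝕜 : Type*} [Fintype n] [RCLike 𝕜] [PartialOrder 𝕜]
    [DecidableEq n]    {A : Matrix n n 𝕜} (hA : A.PosSemidef) : Matrix n n 𝕜 :=
  hA.1.eigenvectorUnitary.1 * diagonal ((↑) ∘ Real.sqrt ∘ hA.1.eigenvalues) *
    (star hA.1.eigenvectorUnitary : Matrix n n 𝕜)

/-!
Conjugating by the orthogonal matrix `V` diagonalises `L`, hence also the resolvent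
`(−Mω² + iDω + L)⁻¹` and, by uniqueness of the positive semidefinite square root, `L^{1/2}`.
So the transfer matrix is unitarily similar to the diagonal matrix of mode responses
`√λ / (λ − Mω² + iDω)`, and its norm is the largest mode gain; the mode `λ = 0` is silent.
For `λ > 0` the gain peaks at the resonance `ω² = (2Mλ − D²)/(2M²)` when this is positive, and
otherwise tends to its supremum `1/√λ` as `ω → 0`. This peak gain decreases in `λ`, so the
supremum over frequencies and modes is the peak gain of `λ₂`.
-/

namespace Matrix

theorem map_ofReal_mul {ι : Type*} [Fintype ι] (A B : Matrix ι ι ℝ) :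
    (A * B).map Complex.ofReal = A.map Complex.ofReal * B.map Complex.ofReal :=
  Matrix.map_mul (f := Complex.ofRealHom)

theorem star_map_ofReal {ι : Type*} (V : Matrix ι ι ℝ) :
    star (V.map Complex.ofReal) = Vᵀ.map Complex.ofReal := by
  ext i j
  simp

theorem map_ofReal_mul_mul_transpose {ι : Type*} [Fintype ι] (V A : Matrix ι ι ℝ) :
    (V * A * Vᵀ).map Complex.ofReal =
      V.map Complex.ofReal * A.map Complex.ofReal * star (V.map Complex.ofReal) := by
  rw [map_ofReal_mul, map_ofReal_mul, star_map_ofReal]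

variable {ι : Type*} [Fintype ι] [DecidableEq ι]

open scoped MatrixOrder in
theorem PosSemidef.sqrt_eq_cfc {A : Matrix ι ι ℝ} (hA : A.PosSemidef) :
    hA.sqrt = cfc Real.sqrt A := by
  rw [hA.1.cfc_eq, IsHermitian.cfc, Unitary.conjStarAlgAut_apply]
  rfl

open scoped MatrixOrder in
theorem PosSemidef.eq_sqrt_of_sq_eq {A B : Matrix ι ι ℝ} (hA : A.PosSemidef)
    (hB : B.PosSemidef) (h : A ^ 2 = B) : A = hB.sqrt := by
  rw [hB.sqrt_eq_cfc, ← cfcₙ_eq_cfc (hf0 := Real.sqrt_zero),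
    ← CFC.sqrt_eq_real_sqrt B hB.nonneg, eq_comm, CFC.sqrt_eq_iff B A hB.nonneg hA.nonneg,
    ← sq, h]

theorem conj_mul_conj {R : Type*} [Semiring R] {V W : Matrix ι ι R} (h : W * V = 1)
    (A B : Matrix ι ι R) : V * A * W * (V * B * W) = V * (A * B) * W := by
  simp only [Matrix.mul_assoc]
  rw [← Matrix.mul_assoc W V, h, Matrix.one_mul]

theorem PosSemidef.sqrt_eq_of_eq_mul_diagonal_mul_transpose {L V : Matrix ι ι ℝ}
    (hL : L.PosSemidef) {d : ι → ℝ} (hd : 0 ≤ d) (hV : Vᵀ * V = 1)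
    (hLd : L = V * diagonal d * Vᵀ) : hL.sqrt = V * diagonal (fun i => √(d i)) * Vᵀ := by
  refine (eq_sqrt_of_sq_eq ?_ hL ?_).symm
  · have hsqrt : (diagonal fun i => √(d i)).PosSemidef :=
      posSemidef_diagonal_iff.mpr fun i => Real.sqrt_nonneg (d i)
    simpa using hsqrt.mul_mul_conjTranspose_same V
  · rw [sq, conj_mul_conj hV, diagonal_mul_diagonal, hLd]
    simp_rw [Real.mul_self_sqrt (hd _)]

theorem map_ofReal_mem_unitary {V : Matrix ι ι ℝ} (hV : Vᵀ * V = 1) :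
    V.map Complex.ofReal ∈ unitary (Matrix ι ι ℂ) := by
  rw [← unitaryGroup, mem_unitaryGroup_iff', star_map_ofReal, ← map_ofReal_mul, hV,
    Matrix.map_one _ Complex.ofReal_zero Complex.ofReal_one]

open scoped Matrix.Norms.L2Operator in
theorem norm_unitary_conj_diagonal_mul_inv {U : Matrix ι ι ℂ} (hU : U ∈ unitary (Matrix ι ι ℂ))
    (s d : ι → ℂ) {a : ℂ} (had : ∀ i, a + d i ≠ 0) :
    ‖U * diagonal s * star U * (a • 1 + U * diagonal d * star U)⁻¹‖ =
      ‖fun i => s i / (a + d i)‖ := by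
  have hconj := conj_mul_conj (Unitary.star_mul_self_of_mem hU)
  have hres :
      (a • 1 + U * diagonal d * star U)⁻¹ = U * diagonal (fun i => (a + d i)⁻¹) * star U := by
    have hsum : a • 1 + U * diagonal d * star U = U * diagonal (fun i => a + d i) * star U := by
      rw [← diagonal_add, ← smul_one_eq_diagonal, Matrix.mul_add, Matrix.add_mul, Matrix.mul_smul,
        Matrix.mul_one, smul_mul, Unitary.mul_star_self_of_mem hU]
    refine inv_eq_right_inv ?_
    rw [hsum, hconj, diagonal_mul_diagonal]
    simp_rw [mul_inv_cancel₀ (had _)]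
    rw [diagonal_one, Matrix.mul_one, Unitary.mul_star_self_of_mem hU]
  rw [hres, hconj, diagonal_mul_diagonal, CStarRing.norm_mul_mem_unitary _ (Unitary.star_mem hU),
    CStarRing.norm_mem_unitary_mul _ hU, l2_opNorm_diagonal]
  simp only [div_eq_mul_inv]

theorem norm_toEuclideanCLM_sqrt_mul_resolvent {L V : Matrix ι ι ℝ} (hL : L.PosSemidef)
    {d : ι → ℝ} (hd : 0 ≤ d) (hV : Vᵀ * V = 1) (hLd : L = V * diagonal d * Vᵀ) {a : ℂ}
    (had : ∀ i, a + d i ≠ 0) :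
    ‖toEuclideanCLM (𝕜 := ℂ) (hL.sqrt.map Complex.ofReal * (a • 1 + L.map Complex.ofReal)⁻¹)‖ =
      ‖fun i => (√(d i) : ℂ) / (a + d i)‖ := by
  rw [hL.sqrt_eq_of_eq_mul_diagonal_mul_transpose hd hV hLd, hLd, map_ofReal_mul_mul_transpose,
    map_ofReal_mul_mul_transpose, diagonal_map Complex.ofReal_zero,
    diagonal_map Complex.ofReal_zero]
  exact norm_unitary_conj_diagonal_mul_inv (map_ofReal_mem_unitary hV) _ _ had

end Matrix

open Set

noncomputable def swingModeResponse (M D l ω : ℝ) : ℂ :=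
  (√l : ℂ) / ((-(M * ω ^ 2) : ℂ) + Complex.I * D * ω + l)

noncomputable def swingModeGain (M D l ω : ℝ) : ℝ :=
  √l / √((l - M * ω ^ 2) ^ 2 + (D * ω) ^ 2)

noncomputable def swingPeakGain (M D l : ℝ) : ℝ :=
  if D ^ 2 ≤ 2 * M * l then 2 * M * √l / (D * √(4 * M * l - D ^ 2)) else 1 / √l

theorem norm_swingModeResponse (M D l ω : ℝ) :
    ‖swingModeResponse M D l ω‖ = swingModeGain M D l ω := by
  have h : (-(M * ω ^ 2) : ℂ) + Complex.I * D * ω + l =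
      ((l - M * ω ^ 2 : ℝ) : ℂ) + ((D * ω : ℝ) : ℂ) * Complex.I := by
    push_cast
    ring
  rw [swingModeResponse, swingModeGain, h, norm_div, Complex.norm_add_mul_I, Complex.norm_real,
    Real.norm_of_nonneg (Real.sqrt_nonneg l)]

theorem swingMode_denom_ne_zero {M D ω : ℝ} (hD : D ≠ 0) (hω : ω ≠ 0) (l : ℝ) :
    (-(M * ω ^ 2) : ℂ) + Complex.I * D * ω + l ≠ 0 := fun h => by
  simpa [← Complex.ofReal_pow, hD, hω] using congrArg Complex.im h

section

variable {M D l : ℝ}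

theorem swingModeGain_eq_sqrt (hl : 0 ≤ l) (ω : ℝ) :
    swingModeGain M D l ω = √(l / ((l - M * ω ^ 2) ^ 2 + (D * ω) ^ 2)) :=
  (Real.sqrt_div hl _).symm

theorem swingPeakGain_eq_sqrt (hM : 0 < M) (hD : 0 < D) (hl : 0 < l) :
    swingPeakGain M D l =
      √(if D ^ 2 ≤ 2 * M * l then 4 * M ^ 2 * l / (D ^ 2 * (4 * M * l - D ^ 2)) else l⁻¹) := by
  unfold swingPeakGain
  split_ifs with h
  · have : 0 < 4 * M * l - D ^ 2 := by nlinarith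
    rw [show 4 * M ^ 2 * l = (2 * M) ^ 2 * l by ring, Real.sqrt_div (by positivity),
      Real.sqrt_mul (by positivity), Real.sqrt_sq (by positivity), Real.sqrt_mul (sq_nonneg D),
      Real.sqrt_sq hD.le]
  · rw [one_div, Real.sqrt_inv]

theorem swingPeakGain_nonneg (hM : 0 < M) (hD : 0 < D) (hl : 0 < l) :
    0 ≤ swingPeakGain M D l :=
  swingPeakGain_eq_sqrt hM hD hl ▸ Real.sqrt_nonneg _

theorem swingModeGain_le_swingPeakGain (hM : 0 < M) (hD : 0 < D) (hl : 0 < l) (ω : ℝ) :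
    swingModeGain M D l ω ≤ swingPeakGain M D l := by
  have hQ : 0 < (l - M * ω ^ 2) ^ 2 + (D * ω) ^ 2 := by
    rcases eq_or_ne ω 0 with rfl | hω
    · simpa using pow_pos hl 2
    · have : 0 < (D * ω) ^ 2 := by positivity
      positivity
  rw [swingModeGain_eq_sqrt hl.le, swingPeakGain_eq_sqrt hM hD hl]
  refine Real.sqrt_le_sqrt ?_
  split_ifs with h
  · have : 0 < 4 * M * l - D ^ 2 := by nlinarith
    rw [div_le_div_iff₀ hQ (by positivity)]
    -- With `Q` the denominator, `4M²Q = (2M(l - Mω²) - D²)² + D²(4Ml - D²)`.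
    nlinarith [mul_nonneg hl.le (sq_nonneg (2 * M * (l - M * ω ^ 2) - D ^ 2))]
  · push Not at h
    rw [div_le_iff₀ hQ, inv_mul_eq_div, le_div_iff₀ hl]
    nlinarith [mul_nonneg (sq_nonneg ω) (sub_nonneg.2 h.le), sq_nonneg (M * ω ^ 2)]

theorem swingPeakGain_antitoneOn (hM : 0 < M) (hD : 0 < D) :
    AntitoneOn (swingPeakGain M D) (Ioi 0) := by
  intro l₀ hl₀ l hl hle
  rw [swingPeakGain_eq_sqrt hM hD hl₀, swingPeakGain_eq_sqrt hM hD hl]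
  refine Real.sqrt_le_sqrt ?_
  have hl₀ : 0 < l₀ := hl₀
  have hl : 0 < l := hl
  split_ifs with h h₀ h₀
  · have : 0 < 4 * M * l₀ - D ^ 2 := by nlinarith
    have : 0 < 4 * M * l - D ^ 2 := by nlinarith
    rw [div_le_div_iff₀ (by positivity) (by positivity)]
    nlinarith [mul_nonneg (by positivity : (0 : ℝ) ≤ 4 * M ^ 2 * D ^ 4) (sub_nonneg.2 hle)]
  · push Not at h₀
    have : 0 < 4 * M * l - D ^ 2 := by nlinarith
    rw [div_le_iff₀ (by positivity), inv_mul_eq_div, le_div_iff₀ hl₀]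
    nlinarith [mul_le_mul_of_nonneg_left h₀.le (by positivity : (0 : ℝ) ≤ 2 * M * l),
      mul_nonneg (sq_nonneg D) (sub_nonneg.2 h)]
  · nlinarith
  · exact inv_anti₀ hl₀ hle

theorem swingModeGain_resonance (hM : 0 < M) (hD : 0 < D) (h : D ^ 2 < 2 * M * l) :
    swingModeGain M D l √((2 * M * l - D ^ 2) / (2 * M ^ 2)) = swingPeakGain M D l := by
  have hl : 0 < l := by nlinarith
  set ω := √((2 * M * l - D ^ 2) / (2 * M ^ 2)) with hω
  have hQ : (l - M * ω ^ 2) ^ 2 + (D * ω) ^ 2 = D ^ 2 * (4 * M * l - D ^ 2) / (4 * M ^ 2) := by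
    rw [mul_pow, hω, Real.sq_sqrt (div_nonneg (by linarith) (by positivity))]
    field_simp
    ring
  rw [swingModeGain_eq_sqrt hl.le, swingPeakGain_eq_sqrt hM hD hl, if_pos h.le, hQ]
  congr 1
  field_simp

theorem swingModeGain_zero_right (hl : 0 ≤ l) : swingModeGain M D l 0 = 1 / √l := by
  simp [swingModeGain, Real.sqrt_sq hl, Real.sqrt_div_self']

theorem swingPeakGain_of_le (hD : 0 < D) (hl : 0 < l) (h : 2 * M * l ≤ D ^ 2) :
    swingPeakGain M D l = 1 / √l := by
  unfold swingPeakGain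
  split_ifs with h'
  · have hDl : D ^ 2 = 2 * M * l := le_antisymm h' h
    rw [show 4 * M * l - D ^ 2 = D ^ 2 by linarith, Real.sqrt_sq hD.le,
      div_eq_div_iff (by positivity) (by positivity), one_mul, mul_assoc, Real.mul_self_sqrt hl.le]
    linarith
  · rfl

theorem iSup_swingModeGain (hM : 0 < M) (hD : 0 < D) (hl : 0 < l) :
    ⨆ ω : {ω : ℝ // ω ≠ 0}, swingModeGain M D l ω = swingPeakGain M D l := by
  have hbdd : BddAbove (range fun ω : {ω : ℝ // ω ≠ 0} => swingModeGain M D l ω) :=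
    ⟨_, forall_mem_range.2 fun ω => swingModeGain_le_swingPeakGain hM hD hl ω⟩
  refine le_antisymm (Real.iSup_le (fun ω => swingModeGain_le_swingPeakGain hM hD hl ω)
    (swingPeakGain_nonneg hM hD hl)) ?_
  rcases lt_or_ge (D ^ 2) (2 * M * l) with h | h
  · have hω : √((2 * M * l - D ^ 2) / (2 * M ^ 2)) ≠ 0 := by
      have : 0 < 2 * M * l - D ^ 2 := by linarith
      positivity
    exact (swingModeGain_resonance hM hD h).symm.trans_le (le_ciSup hbdd ⟨_, hω⟩)
  · rw [swingPeakGain_of_le hD hl h, ← swingModeGain_zero_right (M := M) (D := D) hl.le]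
    have hcont : ContinuousAt (swingModeGain M D l) 0 :=
      continuousAt_const.div (by fun_prop) (by simpa [Real.sqrt_sq hl.le] using hl.ne')
    refine le_of_tendsto (hcont.tendsto.mono_left (nhdsWithin_le_nhds (s := {0}ᶜ))) ?_
    filter_upwards [self_mem_nhdsWithin] with ω hω
    exact le_ciSup hbdd ⟨ω, hω⟩

theorem iSup_norm_swingModeResponse {ι : Type*} [Fintype ι] (hM : 0 < M) (hD : 0 < D)
    {d : ι → ℝ} {i₁ : ι} (hd₁ : 0 < d i₁) (hd : ∀ i, d i = 0 ∨ d i₁ ≤ d i) :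
    ⨆ ω : {ω : ℝ // ω ≠ 0}, ‖fun i => swingModeResponse M D (d i) ω‖ =
      swingPeakGain M D (d i₁) := by
  have hpeak := swingPeakGain_nonneg hM hD hd₁
  have hupper (ω : ℝ) :
      ‖fun i => swingModeResponse M D (d i) ω‖ ≤ swingPeakGain M D (d i₁) := by
    refine (pi_norm_le_iff_of_nonneg hpeak).2 fun i => ?_
    rw [norm_swingModeResponse]
    rcases hd i with h | h
    · simpa [h, swingModeGain] using hpeak
    · exact (swingModeGain_le_swingPeakGain hM hD (hd₁.trans_le h) ω).trans
        (swingPeakGain_antitoneOn hM hD hd₁ (hd₁.trans_le h) h)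
  refine le_antisymm (Real.iSup_le (fun ω => hupper ω) hpeak) ?_
  rw [← iSup_swingModeGain hM hD hd₁]
  refine ciSup_mono ⟨_, forall_mem_range.2 fun ω => hupper ω⟩ fun ω => ?_
  rw [← norm_swingModeResponse]
  exact norm_le_pi_norm (fun i => swingModeResponse M D (d i) ω) i₁

end

/-- H∞ norm of the swing dynamics with phase cohesiveness output.  Let `L` be
symmetric positive semidefinite with orthogonal eigendecomposition
`L = V diag(λ) Vᵀ`, eigenvalues sorted as `0 = λ₁ < λ₂ ≤ … ≤ λ_n`, and let
`L^{1/2}` be its positive semidefinite square root.  Then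
`sup_{ω ≠ 0} ‖L^{1/2}(−Mω²I + jDωI + L)⁻¹‖` equals
`2M√λ₂/(D√(4Mλ₂ − D²))` if `D² ≤ 2Mλ₂`, and `1/√λ₂` otherwise. -/
theorem swing_phase_Hinf_norm (n : ℕ) (M D : ℝ) (hM : 0 < M) (hD : 0 < D)
    (L V : Matrix (Fin (n + 2)) (Fin (n + 2)) ℝ) (hL : L.PosSemidef)
    (lam : Fin (n + 2) → ℝ) (hmono : Monotone lam) (h0 : lam 0 = 0)
    (h1 : 0 < lam 1) (hV : Vᵀ * V = 1)
    (hdec : L = V * Matrix.diagonal lam * Vᵀ) :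
    (⨆ ω : {ω : ℝ // ω ≠ 0},
      ‖Matrix.toEuclideanCLM (𝕜 := ℂ)
          (hL.sqrt.map Complex.ofReal *
            (((-(M * (ω : ℝ) ^ 2) : ℂ) + Complex.I * (D : ℂ) * ((ω : ℝ) : ℂ)) •
                (1 : Matrix (Fin (n + 2)) (Fin (n + 2)) ℂ) +
              L.map Complex.ofReal)⁻¹)‖) =
      if D ^ 2 ≤ 2 * M * lam 1 then
        2 * M * Real.sqrt (lam 1) / (D * Real.sqrt (4 * M * lam 1 - D ^ 2))
      else 1 / Real.sqrt (lam 1) := by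
  have hlam : 0 ≤ lam := fun i => (h0 ▸ hmono (Fin.zero_le i) : 0 ≤ lam i)
  have hresp (ω : {ω : ℝ // ω ≠ 0}) := norm_toEuclideanCLM_sqrt_mul_resolvent hL hlam hV hdec
    (fun i => swingMode_denom_ne_zero (M := M) hD.ne' ω.2 (lam i))
  simp only [hresp]
  refine iSup_norm_swingModeResponse hM hD h1 fun i => ?_
  rcases eq_or_ne i 0 with rfl | hi
  · exact .inl h0
  · exact .inr (hmono (Fin.one_le_of_ne_zero hi))
end

section
/- For all real numbers M > 0, D > 0 and λ > 0, the supremum over ω ∈ ℝ of |ω| / √((λ − Mω²)² + D²ω²) equals 1/D, and it is attained at ω = ±√(λ/M). (This is the H∞ norm of the frequency-output mode G̃(s) = s/(Ms² + Ds + λ).) -/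
/-! The pointwise bound `|ω| / √((λ - Mω²)² + D²ω²) ≤ 1/D` comes from dropping the square
`(λ - Mω²)²` under the root, and it is an equality exactly where that square vanishes, i.e. at
the resonance frequencies `ω = ±√(λ/M)`. -/

lemma abs_div_sqrt_sq_add_sq_mul_sq_le_one_div (x ω : ℝ) {D : ℝ} (hD : 0 < D) :
    |ω| / Real.sqrt (x ^ 2 + D ^ 2 * ω ^ 2) ≤ 1 / D := by
  refine div_le_of_le_mul₀ (Real.sqrt_nonneg _) (one_div_pos.mpr hD).le ?_
  have hroot : D * |ω| ≤ Real.sqrt (x ^ 2 + D ^ 2 * ω ^ 2) :=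
    Real.le_sqrt_of_sq_le (by nlinarith [sq_nonneg x, sq_abs ω])
  calc |ω| = 1 / D * (D * |ω|) := by field_simp
    _ ≤ 1 / D * Real.sqrt (x ^ 2 + D ^ 2 * ω ^ 2) := by gcongr

lemma abs_div_sqrt_zero_sq_add_sq_mul_sq {D ω : ℝ} (hD : 0 < D) (hω : ω ≠ 0) :
    |ω| / Real.sqrt (0 ^ 2 + D ^ 2 * ω ^ 2) = 1 / D := by
  have hroot : Real.sqrt (0 ^ 2 + D ^ 2 * ω ^ 2) = D * |ω| := by
    rw [show (0 : ℝ) ^ 2 + D ^ 2 * ω ^ 2 = (D * |ω|) ^ 2 by rw [mul_pow, sq_abs]; ring]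
    exact Real.sqrt_sq (by positivity)
  rw [hroot]
  field_simp [abs_ne_zero.mpr hω]

lemma sub_mul_sq_sqrt_div_eq_zero {M lam : ℝ} (hM : M ≠ 0) (h : 0 ≤ lam / M) :
    lam - M * Real.sqrt (lam / M) ^ 2 = 0 := by
  rw [Real.sq_sqrt h]
  field_simp
  ring

/-- The H∞ norm of the frequency-output mode `G̃(s) = s/(Ms² + Ds + λ)`:
`sup_{ω ∈ ℝ} |ω|/√((λ − Mω²)² + D²ω²) = 1/D`, and the supremum is attained at
`ω = ±√(λ/M)`. -/
theorem frequency_mode_Hinf_norm (M D lam : ℝ) (hM : 0 < M) (hD : 0 < D)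
    (hlam : 0 < lam) :
    (⨆ ω : ℝ, |ω| / Real.sqrt ((lam - M * ω ^ 2) ^ 2 + D ^ 2 * ω ^ 2)) = 1 / D ∧
    |Real.sqrt (lam / M)| /
        Real.sqrt ((lam - M * (Real.sqrt (lam / M)) ^ 2) ^ 2 +
          D ^ 2 * (Real.sqrt (lam / M)) ^ 2) = 1 / D ∧
    |-Real.sqrt (lam / M)| /
        Real.sqrt ((lam - M * (-Real.sqrt (lam / M)) ^ 2) ^ 2 +
          D ^ 2 * (-Real.sqrt (lam / M)) ^ 2) = 1 / D := by
  have hratio : 0 < lam / M := div_pos hlam hM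
  have hres : |Real.sqrt (lam / M)| /
      Real.sqrt ((lam - M * (Real.sqrt (lam / M)) ^ 2) ^ 2 +
        D ^ 2 * (Real.sqrt (lam / M)) ^ 2) = 1 / D := by
    rw [sub_mul_sq_sqrt_div_eq_zero hM.ne' hratio.le]
    exact abs_div_sqrt_zero_sq_add_sq_mul_sq hD (Real.sqrt_pos.mpr hratio).ne'
  have hbound := fun ω : ℝ ↦ abs_div_sqrt_sq_add_sq_mul_sq_le_one_div (lam - M * ω ^ 2) ω hD
  refine ⟨?_, hres, by simpa only [abs_neg, neg_sq] using hres⟩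
  exact ciSup_eq_of_forall_le_of_forall_lt_exists_gt hbound
    fun w hw ↦ ⟨Real.sqrt (lam / M), hres ▸ hw⟩
end

section
/- Let L ∈ ℝ^{n×n} be symmetric positive semidefinite, M > 0, D > 0. Then the supremum over ω ∈ ℝ \ {0} of the operator norm ‖(jω)·(−Mω² I + jDω I + L)^{-1}‖ equals 1/D. (Thus the H∞ norm of the swing dynamics with frequency output is 1/D, independent of both the inertia M and the network structure.) -/
/-!
For Hermitian `L` and `ω ≠ 0`, `Im ⟪x, (z • 1 + L) x⟫ = Im z ‖x‖²` with `Im z = Dω`, so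
`‖(z • 1 + L) x‖ ≥ D |ω| ‖x‖`, and hence `‖G(jω)‖ ≤ |ω| / (D |ω|) = 1 / D`.
Conversely, on a real eigenvector of `L` with eigenvalue `μ ≥ 0` the matrix `G(jω)` acts as the
scalar `jω / (μ - Mω² + jDω)`, whose modulus tends to `1 / D` as `ω` decreases to the resonant
frequency `√(μ / M)`. When `μ = 0` that frequency is the excluded `ω = 0`, so the value `1 / D` is
in general only a supremum.
-/

open Matrix

theorem LinearMap.IsSymmetric.abs_im_mul_norm_le {E : Type*} [NormedAddCommGroup E]
    [InnerProductSpace ℂ E] {T : E →ₗ[ℂ] E} (hT : T.IsSymmetric) (z : ℂ) (x : E) :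
    |z.im| * ‖x‖ ≤ ‖z • x + T x‖ := by
  rcases eq_or_ne x 0 with rfl | hx
  · simp
  have him : (inner ℂ x (z • x + T x)).im = z.im * ‖x‖ ^ 2 := by
    have hTx : (inner ℂ x (T x)).im = 0 := hT.im_inner_self_apply x
    rw [inner_add_right, inner_smul_right, Complex.add_im, hTx, inner_self_eq_norm_sq_to_K]
    simp [Complex.mul_im, ← Complex.ofReal_pow]
  refine le_of_mul_le_mul_left ?_ (norm_pos_iff.mpr hx)
  calc ‖x‖ * (|z.im| * ‖x‖) = |(inner ℂ x (z • x + T x)).im| := by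
        rw [him, abs_mul, abs_pow, abs_norm]; ring
    _ ≤ ‖inner ℂ x (z • x + T x)‖ := Complex.abs_im_le_norm _
    _ ≤ ‖x‖ * ‖z • x + T x‖ := norm_inner_le_norm _ _

namespace Matrix

variable {ι 𝕜 : Type*} [Fintype ι] [DecidableEq ι] [RCLike 𝕜] {A : Matrix ι ι 𝕜}

theorem isUnit_of_mul_norm_le_norm_toEuclideanCLM {c : ℝ} (hc : 0 < c)
    (hA : ∀ x, c * ‖x‖ ≤ ‖toEuclideanCLM (𝕜 := 𝕜) A x‖) : IsUnit A := by
  refine mulVec_injective_iff_isUnit.mp ((injective_iff_map_eq_zero A.mulVecLin).mpr ?_)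
  intro v hv
  have hbound := hA (WithLp.toLp 2 v)
  rw [toEuclideanCLM_toLp, ← mulVecLin_apply, hv, WithLp.toLp_zero, norm_zero] at hbound
  have hv0 : ‖WithLp.toLp 2 v‖ ≤ 0 := nonpos_of_mul_nonpos_right hbound hc
  simpa using hv0

theorem norm_toEuclideanCLM_nonsing_inv_le {c : ℝ} (hc : 0 < c)
    (hA : ∀ x, c * ‖x‖ ≤ ‖toEuclideanCLM (𝕜 := 𝕜) A x‖) :
    ‖toEuclideanCLM (𝕜 := 𝕜) A⁻¹‖ ≤ c⁻¹ := by
  have hdet := (isUnit_iff_isUnit_det A).mp (isUnit_of_mul_norm_le_norm_toEuclideanCLM hc hA)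
  refine ContinuousLinearMap.opNorm_le_bound _ (inv_nonneg.mpr hc.le) fun y ↦ ?_
  have hy : toEuclideanCLM (𝕜 := 𝕜) A (toEuclideanCLM (𝕜 := 𝕜) A⁻¹ y) = y := by
    change (toEuclideanCLM (𝕜 := 𝕜) A * toEuclideanCLM (𝕜 := 𝕜) A⁻¹) y = y
    rw [← map_mul, mul_nonsing_inv _ hdet, map_one]
    rfl
  have hbound := hA (toEuclideanCLM (𝕜 := 𝕜) A⁻¹ y)
  rw [hy] at hbound
  rw [inv_mul_eq_div, le_div_iff₀ hc]
  linarith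

theorem inv_norm_le_norm_toEuclideanCLM_nonsing_inv (hA : IsUnit A) {v : ι → 𝕜} (hv : v ≠ 0)
    {c : 𝕜} (hAv : A *ᵥ v = c • v) : ‖c‖⁻¹ ≤ ‖toEuclideanCLM (𝕜 := 𝕜) A⁻¹‖ := by
  have hinv : A⁻¹ *ᵥ v = c⁻¹ • v := by
    have hcv : c • (A⁻¹ *ᵥ v) = v := by
      rw [← mulVec_smul, ← hAv, mulVec_mulVec,
        nonsing_inv_mul _ ((isUnit_iff_isUnit_det A).mp hA), one_mulVec]
    have hc : c ≠ 0 := by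
      rintro rfl
      exact hv (by simpa using hcv.symm)
    rw [eq_inv_smul_iff₀ hc, hcv]
  have hx : 0 < ‖WithLp.toLp 2 v‖ := by simpa using hv
  refine le_of_mul_le_mul_right ?_ hx
  calc ‖c‖⁻¹ * ‖WithLp.toLp 2 v‖ = ‖toEuclideanCLM (𝕜 := 𝕜) A⁻¹ (WithLp.toLp 2 v)‖ := by
        rw [toEuclideanCLM_toLp, hinv, WithLp.toLp_smul, norm_smul, norm_inv]
    _ ≤ _ := ContinuousLinearMap.le_opNorm _ _

end Matrix

namespace Matrix.IsHermitian

theorem map_ofReal {ι : Type*} {L : Matrix ι ι ℝ} (hL : L.IsHermitian) :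
    (L.map Complex.ofReal).IsHermitian :=
  hL.map _ fun _ ↦ (Complex.conj_ofReal _).symm

variable {ι : Type*} [Fintype ι] [DecidableEq ι] {H : Matrix ι ι ℂ}

theorem abs_im_mul_norm_le_norm_toEuclideanCLM_smul_one_add (hH : H.IsHermitian) (z : ℂ)
    (x : EuclideanSpace ℂ ι) : |z.im| * ‖x‖ ≤ ‖toEuclideanCLM (𝕜 := ℂ) (z • 1 + H) x‖ := by
  rw [map_add, map_smul, map_one]
  exact (isSymmetric_toEuclideanLin_iff.mpr hH).abs_im_mul_norm_le z x

theorem isUnit_smul_one_add (hH : H.IsHermitian) {z : ℂ} (hz : z.im ≠ 0) : IsUnit (z • 1 + H) :=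
  isUnit_of_mul_norm_le_norm_toEuclideanCLM (A := z • 1 + H) (abs_pos.mpr hz)
    (hH.abs_im_mul_norm_le_norm_toEuclideanCLM_smul_one_add z)

theorem norm_toEuclideanCLM_inv_smul_one_add_le (hH : H.IsHermitian) {z : ℂ} (hz : z.im ≠ 0) :
    ‖toEuclideanCLM (𝕜 := ℂ) (z • (1 : Matrix ι ι ℂ) + H)⁻¹‖ ≤ |z.im|⁻¹ :=
  norm_toEuclideanCLM_nonsing_inv_le (A := z • 1 + H) (abs_pos.mpr hz)
    (hH.abs_im_mul_norm_le_norm_toEuclideanCLM_smul_one_add z)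

end Matrix.IsHermitian

theorem Matrix.PosSemidef.exists_nonneg_eigenvalue {ι : Type*} [Fintype ι] [DecidableEq ι]
    [Nonempty ι] {L : Matrix ι ι ℝ} (hL : L.PosSemidef) :
    ∃ μ : ℝ, 0 ≤ μ ∧ ∃ v ≠ 0, L *ᵥ v = μ • v := by
  obtain ⟨i⟩ := ‹Nonempty ι›
  refine ⟨_, hL.eigenvalues_nonneg i, _, ?_, hL.1.mulVec_eigenvectorBasis i⟩
  simpa using hL.1.eigenvectorBasis.orthonormal.ne_zero i

noncomputable def swingSymbol (M D ω : ℝ) : ℂ :=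
  (-(M * ω ^ 2) : ℂ) + Complex.I * (D : ℂ) * (ω : ℂ)

theorem swingSymbol_im (M D ω : ℝ) : (swingSymbol M D ω).im = D * ω := by
  simp [swingSymbol, ← Complex.ofReal_pow]

/-- `ω - t` is the resonant frequency of `μ`, so the real part of the symbol is only `O(t ω)`. -/
theorem norm_swingSymbol_add_le {M D μ ω t : ℝ} (hM : 0 ≤ M) (hD : 0 ≤ D) (ht : 0 ≤ t)
    (htω : t ≤ ω) (hμ : M * (ω - t) ^ 2 = μ) :
    ‖swingSymbol M D ω + μ‖ ≤ ω * (D + 2 * M * t) := by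
  refine (Complex.norm_le_abs_re_add_abs_im _).trans ?_
  have hre : (swingSymbol M D ω + μ).re = -(M * t * (2 * ω - t)) := by
    simp [swingSymbol, ← Complex.ofReal_pow, ← hμ]; ring
  have hMt : 0 ≤ M * t := mul_nonneg hM ht
  rw [hre, Complex.add_im, swingSymbol_im, Complex.ofReal_im, add_zero, abs_neg,
    abs_of_nonneg (by nlinarith), abs_of_nonneg (by nlinarith)]
  nlinarith

section SwingTransfer

variable {ι : Type*} [Fintype ι] [DecidableEq ι]

noncomputable def swingTransfer (M D : ℝ) (L : Matrix ι ι ℝ) (ω : ℝ) : Matrix ι ι ℂ :=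
  (Complex.I * (ω : ℂ)) • (swingSymbol M D ω • (1 : Matrix ι ι ℂ) + L.map Complex.ofReal)⁻¹

theorem norm_toEuclideanCLM_swingTransfer (M D : ℝ) (L : Matrix ι ι ℝ) (ω : ℝ) :
    ‖toEuclideanCLM (𝕜 := ℂ) (swingTransfer M D L ω)‖ = |ω| *
      ‖toEuclideanCLM (𝕜 := ℂ) (swingSymbol M D ω • (1 : Matrix ι ι ℂ) + L.map Complex.ofReal)⁻¹‖ := by
  rw [swingTransfer, map_smul, norm_smul, norm_mul, Complex.norm_I, one_mul, Complex.norm_real,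
    Real.norm_eq_abs]

theorem norm_toEuclideanCLM_swingTransfer_le {M D : ℝ} (hD : 0 < D) {L : Matrix ι ι ℝ}
    (hL : L.IsHermitian) {ω : ℝ} (hω : ω ≠ 0) :
    ‖toEuclideanCLM (𝕜 := ℂ) (swingTransfer M D L ω)‖ ≤ 1 / D := by
  have hz := swingSymbol_im M D ω
  rw [norm_toEuclideanCLM_swingTransfer]
  calc _ ≤ |ω| * |D * ω|⁻¹ := by
        gcongr
        exact hz ▸ hL.map_ofReal.norm_toEuclideanCLM_inv_smul_one_add_le
          (hz ▸ mul_ne_zero hD.ne' hω)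
    _ = 1 / D := by
        rw [abs_mul, abs_of_pos hD]; field_simp

theorem le_norm_toEuclideanCLM_swingTransfer {M D : ℝ} (hM : 0 ≤ M) (hD : 0 < D)
    {L : Matrix ι ι ℝ} (hL : L.IsHermitian) {μ : ℝ} {v : ι → ℝ} (hv : v ≠ 0)
    (hLv : L *ᵥ v = μ • v) {ω t : ℝ} (ht : 0 < t) (htω : t ≤ ω) (hμ : M * (ω - t) ^ 2 = μ) :
    (D + 2 * M * t)⁻¹ ≤ ‖toEuclideanCLM (𝕜 := ℂ) (swingTransfer M D L ω)‖ := by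
  set z := swingSymbol M D ω
  have hω : 0 < ω := ht.trans_le htω
  have hzμ : (z + μ).im ≠ 0 := by
    rw [Complex.add_im, swingSymbol_im, Complex.ofReal_im, add_zero]
    exact (mul_pos hD hω).ne'
  set w : ι → ℂ := Complex.ofReal ∘ v
  have hw : w ≠ 0 := fun h ↦ hv (funext fun i ↦ by simpa [w] using congrFun h i)
  have hLw : L.map Complex.ofReal *ᵥ w = (μ : ℂ) • w := funext fun i ↦
    (RingHom.map_mulVec Complex.ofRealHom L v i).symm.trans (by simp [hLv, w])
  have hAw : (z • 1 + L.map Complex.ofReal) *ᵥ w = (z + μ) • w := by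
    rw [add_mulVec, smul_mulVec, one_mulVec, hLw, ← add_smul]
  have hunit : IsUnit (z • 1 + L.map Complex.ofReal) :=
    hL.map_ofReal.isUnit_smul_one_add (by simpa using hzμ)
  have hpos : 0 < ‖z + μ‖ := norm_pos_iff.mpr fun h ↦ hzμ (by rw [h, Complex.zero_im])
  rw [norm_toEuclideanCLM_swingTransfer, abs_of_pos hω]
  calc (D + 2 * M * t)⁻¹ = ω * (ω * (D + 2 * M * t))⁻¹ := by
        field_simp
    _ ≤ ω * ‖z + μ‖⁻¹ := by
        gcongr
        exact norm_swingSymbol_add_le hM hD.le ht.le htω hμ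
    _ ≤ _ := by
        gcongr
        exact inv_norm_le_norm_toEuclideanCLM_nonsing_inv hunit hw hAw

end SwingTransfer

open Filter Topology in
/-- H∞ norm of the swing dynamics with frequency output: for a symmetric
positive semidefinite Laplacian `L` (of a network with at least one
generator), `sup_{ω ≠ 0} ‖(jω)(−Mω²I + jDωI + L)⁻¹‖ = 1/D`, independent of
both the inertia `M` and the network structure. -/
theorem swing_freq_Hinf_norm (n : ℕ) (M D : ℝ) (hM : 0 < M) (hD : 0 < D)
    (L : Matrix (Fin (n + 1)) (Fin (n + 1)) ℝ) (hL : L.PosSemidef) :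
    (⨆ ω : {ω : ℝ // ω ≠ 0},
      ‖Matrix.toEuclideanCLM (𝕜 := ℂ)
          ((Complex.I * ((ω : ℝ) : ℂ)) •
            (((-(M * (ω : ℝ) ^ 2) : ℂ) + Complex.I * (D : ℂ) * ((ω : ℝ) : ℂ)) •
                (1 : Matrix (Fin (n + 1)) (Fin (n + 1)) ℂ) +
              L.map Complex.ofReal)⁻¹)‖) = 1 / D := by
  change ⨆ ω : {ω : ℝ // ω ≠ 0}, ‖toEuclideanCLM (𝕜 := ℂ) (swingTransfer M D L ω)‖ = 1 / D
  have : Nonempty {ω : ℝ // ω ≠ 0} := ⟨⟨1, one_ne_zero⟩⟩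
  have upper (ω : {ω : ℝ // ω ≠ 0}) : ‖toEuclideanCLM (𝕜 := ℂ) (swingTransfer M D L ω)‖ ≤ 1 / D :=
    norm_toEuclideanCLM_swingTransfer_le hD hL.1 ω.2
  obtain ⟨μ, hμ, v, hv, hLv⟩ := hL.exists_nonneg_eigenvalue
  set s := √(μ / M)
  have hs : M * s ^ 2 = μ := by
    rw [Real.sq_sqrt (div_nonneg hμ hM.le)]; field_simp
  have lower (t : ℝ) (ht : 0 < t) : (D + 2 * M * t)⁻¹ ≤
      ⨆ ω : {ω : ℝ // ω ≠ 0}, ‖toEuclideanCLM (𝕜 := ℂ) (swingTransfer M D L ω)‖ :=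
    (le_norm_toEuclideanCLM_swingTransfer hM.le hD hL.1 hv hLv ht
      (le_add_of_nonneg_left (Real.sqrt_nonneg _)) (by rwa [add_sub_cancel_right])).trans
      (le_ciSup ⟨1 / D, Set.forall_mem_range.mpr upper⟩ (⟨s + t, by positivity⟩ : {ω : ℝ // ω ≠ 0}))
  have hlim : Tendsto (fun t : ℝ ↦ (D + 2 * M * t)⁻¹) (𝓝[>] 0) (𝓝 (1 / D)) := by
    have : ContinuousAt (fun t : ℝ ↦ (D + 2 * M * t)⁻¹) 0 :=
      (continuousAt_const.add (continuousAt_const.mul continuousAt_id)).inv₀ (by simp [hD.ne'])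
    simpa using this.tendsto.mono_left nhdsWithin_le_nhds
  exact le_antisymm (ciSup_le upper) (le_of_tendsto hlim (eventually_nhdsWithin_of_forall lower))
end
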